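/- arXiv:math/0007163 — 3 statements merged into one kernel-verified Lean document; each statement's English description precedes it below -/
import Mathlib

section
/- Let E₈³ be the lattice of vectors (m₁,m₂,m₃,m₄) with either all mᵢ ∈ ℤ or all mᵢ ∈ ℤ+1/2, and Σmᵢ even, with norm m₁²+m₂²+3m₃²+3m₄². Then every norm-6 vector of E₈³ lies in 3(E₈³)', where (E₈³)' is the dual lattice; consequently the roots of E₈³ are exactly its vectors of norm 2 and norm 6. -/
/-!
In doubled coordinates `E₈³` consists of the integer vectors whose coordinates share a parity and
sum to a multiple of `4`. Modulo `8` an odd square is `1` and an even square `x²` is `2x`, so the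
lattice is even, hence integral.

If `v` has norm `6`, its doubled coordinates satisfy `x₀² + x₁² + 3(x₂² + x₃²) = 24`, so `3`
divides `x₀² + x₁²` and therefore `x₀` and `x₁`; every pairing `4(w, v)` with `w ∈ E₈³` is then
divisible by `3`, i.e. `v / 3 ∈ (E₈³)'`. Conversely, pairing a dual vector with the four lattice
vectors `(1/2)(1, ±1, ±1, ±1)` of even sign pattern shows `3 (E₈³)' ⊆ E₈³`.

The reflection in `v` preserves `E₈³` as soon as `2v/(v,v) ∈ (E₈³)'`, and for primitive `v` only
then. For a root `v`, `6v/(v,v) = 3 · 2v/(v,v)` lies in `E₈³`, so by primitivity `6/(v,v)` is an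
integer and `(v,v) ∈ {2, 6}`. Conversely, vectors of norm `2` and `6` are primitive, since nonzero
lattice vectors have norm at least `2`.
-/

/-- The lattice `E₈³`: vectors `(m₁,m₂,m₃,m₄)` with all `mᵢ ∈ ℤ` or all `mᵢ ∈ ℤ+1/2`,
and `Σ mᵢ` even. -/
def E83 : Set (Fin 4 → ℚ) :=
  {v | ((∀ i, ∃ k : ℤ, v i = k) ∨ (∀ i, ∃ k : ℤ, v i = k + 1 / 2)) ∧
    ∃ s : ℤ, v 0 + v 1 + v 2 + v 3 = 2 * s}

/-- The bilinear form of `E₈³`, with norm `m₁²+m₂²+3m₃²+3m₄²`. -/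
def B83 (v w : Fin 4 → ℚ) : ℚ :=
  v 0 * w 0 + v 1 * w 1 + 3 * (v 2 * w 2) + 3 * (v 3 * w 3)

/-- The quadratic form (norm) of `E₈³`. -/
def Q83 (v : Fin 4 → ℚ) : ℚ := B83 v v

/-- The dual lattice `(E₈³)'`. -/
def dual83 : Set (Fin 4 → ℚ) := {w | ∀ v ∈ E83, ∃ k : ℤ, B83 v w = k}

/-- A root of `E₈³`: a primitive vector whose reflection preserves the lattice. -/
def IsRoot83 (v : Fin 4 → ℚ) : Prop :=
  v ∈ E83 ∧ v ≠ 0 ∧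
    (∀ (k : ℤ) (w : Fin 4 → ℚ), w ∈ E83 → v = (k : ℚ) • w → k = 1 ∨ k = -1) ∧
    ∀ x ∈ E83, x - (2 * B83 x v / Q83 v) • v ∈ E83

def IsDoubledE83 (x : Fin 4 → ℤ) : Prop :=
  (∀ i, x i % 2 = x 0 % 2) ∧ (x 0 + x 1 + x 2 + x 3) % 4 = 0

lemma mem_E83_iff {v : Fin 4 → ℚ} :
    v ∈ E83 ↔ ∃ x : Fin 4 → ℤ, IsDoubledE83 x ∧ ∀ i, (x i : ℚ) = 2 * v i := by
  constructor
  · rintro ⟨hcoord | hcoord, s, hs⟩ <;> choose k hk using hcoord <;>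
      simp only [hk] at hs
    · refine ⟨fun i => 2 * k i, ⟨fun i => by dsimp only; omega, ?_⟩, fun i => by simp [hk]⟩
      have : k 0 + k 1 + k 2 + k 3 = 2 * s := by exact_mod_cast hs
      dsimp only; omega
    · refine ⟨fun i => 2 * k i + 1, ⟨fun i => by dsimp only; omega, ?_⟩,
          fun i => by push_cast [hk]; ring⟩
      have : k 0 + k 1 + k 2 + k 3 + 2 = 2 * s := by
        have : ((k 0 + k 1 + k 2 + k 3 + 2 : ℤ) : ℚ) = 2 * s := by push_cast; linarith
        exact_mod_cast this
      dsimp only; omega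
  · rintro ⟨x, ⟨hpar, hsum⟩, hx⟩
    have hv : ∀ i, v i = (x i / 2 : ℤ) + ((x 0 % 2 : ℤ) : ℚ) / 2 := fun i => by
      have : x i = 2 * (x i / 2) + x 0 % 2 := by have := hpar i; omega
      have hxi := hx i
      rw [this] at hxi
      push_cast at hxi
      linarith
    refine ⟨?_, (x 0 + x 1 + x 2 + x 3) / 4, ?_⟩
    · rcases Int.emod_two_eq (x 0) with h | h <;> rw [h] at hv
      · exact Or.inl fun i => ⟨x i / 2, by simpa using hv i⟩
      · exact Or.inr fun i => ⟨x i / 2, by simpa using hv i⟩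
    · have : ((x 0 + x 1 + x 2 + x 3 : ℤ) : ℚ) = ((4 * ((x 0 + x 1 + x 2 + x 3) / 4) : ℤ) : ℚ) := by
        congr 1; omega
      push_cast at this
      linarith [hx 0, hx 1, hx 2, hx 3]

lemma half_mem_E83 {x : Fin 4 → ℤ} (hx : IsDoubledE83 x) : (fun i => (x i : ℚ) / 2) ∈ E83 :=
  mem_E83_iff.2 ⟨x, hx, fun i => by ring⟩

def E83.addSubgroup : AddSubgroup (Fin 4 → ℚ) where
  carrier := E83
  zero_mem' := mem_E83_iff.2 ⟨0, ⟨fun _ => rfl, rfl⟩, fun _ => by simp⟩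
  add_mem' := by
    rintro v w hv hw
    obtain ⟨x, ⟨hxpar, hxsum⟩, hx⟩ := mem_E83_iff.1 hv
    obtain ⟨y, ⟨hypar, hysum⟩, hy⟩ := mem_E83_iff.1 hw
    refine mem_E83_iff.2 ⟨x + y, ⟨fun i => ?_, ?_⟩, fun i => ?_⟩
    · have := hxpar i; have := hypar i; simp only [Pi.add_apply]; omega
    · simp only [Pi.add_apply]; omega
    · simp only [Pi.add_apply, Int.cast_add, hx, hy]; ring
  neg_mem' := by
    rintro v hv
    obtain ⟨x, ⟨hxpar, hxsum⟩, hx⟩ := mem_E83_iff.1 hv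
    refine mem_E83_iff.2 ⟨-x, ⟨fun i => ?_, ?_⟩, fun i => by simp [hx]⟩
    · have := hxpar i; simp only [Pi.neg_apply]; omega
    · simp only [Pi.neg_apply]; omega

lemma E83.sub_int_smul_mem {x v : Fin 4 → ℚ} (hx : x ∈ E83) (hv : v ∈ E83) (k : ℤ) :
    x - (k : ℚ) • v ∈ E83 := by
  rw [Int.cast_smul_eq_zsmul]
  exact E83.addSubgroup.sub_mem hx (E83.addSubgroup.zsmul_mem hv k)

lemma B83_smul_right (c : ℚ) (v w : Fin 4 → ℚ) : B83 v (c • w) = c * B83 v w := by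
  simp only [B83, Pi.smul_apply, smul_eq_mul]; ring

lemma Q83_smul (c : ℚ) (v : Fin 4 → ℚ) : Q83 (c • v) = c ^ 2 * Q83 v := by
  simp only [Q83, B83, Pi.smul_apply, smul_eq_mul]; ring

lemma Q83_pos {v : Fin 4 → ℚ} (hv : v ≠ 0) : 0 < Q83 v := by
  obtain ⟨i, hi⟩ : ∃ i, v i ≠ 0 := Function.ne_iff.1 hv
  simp only [Q83, B83]
  fin_cases i <;> simp only [Fin.zero_eta, Fin.mk_one, Fin.reduceFinMk, Fin.isValue] at hi <;>
    nlinarith [sq_nonneg (v 0), sq_nonneg (v 1), sq_nonneg (v 2), sq_nonneg (v 3),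
      sq_pos_of_ne_zero hi]

lemma four_mul_B83 {v w : Fin 4 → ℚ} {x y : Fin 4 → ℤ} (hx : ∀ i, (x i : ℚ) = 2 * v i)
    (hy : ∀ i, (y i : ℚ) = 2 * w i) :
    4 * B83 v w = ((x 0 * y 0 + x 1 * y 1 + 3 * (x 2 * y 2) + 3 * (x 3 * y 3) : ℤ) : ℚ) := by
  push_cast; simp only [hx, hy, B83]; ring

lemma Int.mul_self_emod_eight_of_even {a : ℤ} (ha : a % 2 = 0) : a * a % 8 = 2 * a % 8 := by
  obtain ⟨k, rfl⟩ : ∃ k, a = 2 * k := ⟨a / 2, by omega⟩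
  obtain ⟨t, ht⟩ := Int.even_mul_pred_self k
  have : 2 * k * (2 * k) = 2 * (2 * k) + 8 * t := by linear_combination 4 * ht
  omega

lemma Int.mul_self_emod_eight_of_odd {a : ℤ} (ha : a % 2 = 1) : a * a % 8 = 1 := by
  obtain ⟨k, rfl⟩ : ∃ k, a = 2 * k + 1 := ⟨a / 2, by omega⟩
  obtain ⟨t, ht⟩ := Int.even_mul_succ_self k
  have : (2 * k + 1) * (2 * k + 1) = 1 + 8 * t := by linear_combination 4 * ht
  omega

lemma IsDoubledE83.eight_dvd {x : Fin 4 → ℤ} (hx : IsDoubledE83 x) :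
    8 ∣ x 0 * x 0 + x 1 * x 1 + 3 * (x 2 * x 2) + 3 * (x 3 * x 3) := by
  obtain ⟨hpar, hsum⟩ := hx
  have h1 := hpar 1; have h2 := hpar 2; have h3 := hpar 3
  rcases Int.emod_two_eq (x 0) with h0 | h0
  · have := Int.mul_self_emod_eight_of_even h0
    have := Int.mul_self_emod_eight_of_even (h1.trans h0)
    have := Int.mul_self_emod_eight_of_even (h2.trans h0)
    have := Int.mul_self_emod_eight_of_even (h3.trans h0)
    omega
  · have := Int.mul_self_emod_eight_of_odd h0
    have := Int.mul_self_emod_eight_of_odd (h1.trans h0)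
    have := Int.mul_self_emod_eight_of_odd (h2.trans h0)
    have := Int.mul_self_emod_eight_of_odd (h3.trans h0)
    omega

lemma Q83_even {v : Fin 4 → ℚ} (hv : v ∈ E83) : ∃ n : ℤ, Q83 v = 2 * n := by
  obtain ⟨x, hx, hxv⟩ := mem_E83_iff.1 hv
  obtain ⟨n, hn⟩ := hx.eight_dvd
  refine ⟨n, ?_⟩
  have := four_mul_B83 hxv hxv
  rw [hn] at this
  push_cast at this
  rw [Q83]; linarith

lemma B83_int {v w : Fin 4 → ℚ} (hv : v ∈ E83) (hw : w ∈ E83) : ∃ b : ℤ, B83 v w = b := by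
  obtain ⟨n, hn⟩ := Q83_even (E83.addSubgroup.add_mem hv hw)
  obtain ⟨p, hp⟩ := Q83_even hv
  obtain ⟨q, hq⟩ := Q83_even hw
  have hpolar : Q83 (v + w) = Q83 v + Q83 w + 2 * B83 v w := by
    simp only [Q83, B83, Pi.add_apply]; ring
  refine ⟨n - p - q, ?_⟩
  push_cast
  linarith

lemma two_le_Q83 {v : Fin 4 → ℚ} (hv : v ∈ E83) (h0 : v ≠ 0) : 2 ≤ Q83 v := by
  obtain ⟨n, hn⟩ := Q83_even hv
  have hpos := Q83_pos h0
  rw [hn] at hpos ⊢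
  have : (0 : ℤ) < n := by exact_mod_cast (by linarith : (0 : ℚ) < n)
  have : (1 : ℚ) ≤ n := by exact_mod_cast this
  linarith

lemma Int.three_dvd_of_three_dvd_mul_self_add_mul_self {a b : ℤ} (h : 3 ∣ a * a + b * b) :
    3 ∣ a ∧ 3 ∣ b := by
  have hmod : ∀ a' b' : ZMod 3, a' * a' + b' * b' = 0 → a' = 0 ∧ b' = 0 := by decide
  obtain ⟨ha, hb⟩ := hmod a b (by exact_mod_cast (ZMod.intCast_zmod_eq_zero_iff_dvd _ 3).2 h)
  exact ⟨(ZMod.intCast_zmod_eq_zero_iff_dvd _ 3).1 ha, (ZMod.intCast_zmod_eq_zero_iff_dvd _ 3).1 hb⟩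

lemma inv_three_smul_mem_dual83 {v : Fin 4 → ℚ} (hv : v ∈ E83) (h6 : Q83 v = 6) :
    (3 : ℚ)⁻¹ • v ∈ dual83 := by
  intro w hw
  obtain ⟨x, -, hxv⟩ := mem_E83_iff.1 hv
  obtain ⟨y, -, hyw⟩ := mem_E83_iff.1 hw
  obtain ⟨b, hb⟩ := B83_int hw hv
  have hnorm : x 0 * x 0 + x 1 * x 1 + 3 * (x 2 * x 2) + 3 * (x 3 * x 3) = 24 := by
    have h := four_mul_B83 hxv hxv
    rw [← Q83, h6] at h
    norm_num at h
    exact_mod_cast h.symm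
  obtain ⟨⟨a0, ha0⟩, ⟨a1, ha1⟩⟩ :=
    Int.three_dvd_of_three_dvd_mul_self_add_mul_self (a := x 0) (b := x 1)
      ⟨8 - x 2 * x 2 - x 3 * x 3, by linarith⟩
  have h4b : 4 * b = 3 * (y 0 * a0 + y 1 * a1 + y 2 * x 2 + y 3 * x 3) := by
    have := four_mul_B83 hyw hxv
    rw [hb] at this
    have : 4 * b = y 0 * x 0 + y 1 * x 1 + 3 * (y 2 * x 2) + 3 * (y 3 * x 3) := by
      exact_mod_cast this
    rw [this, ha0, ha1]; ring
  obtain ⟨c, rfl⟩ : 3 ∣ b := by omega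
  exact ⟨c, by rw [B83_smul_right, hb]; push_cast; ring⟩

lemma AddSubgroup.exists_int_eq_of_smul_mem {V : Type*} [AddCommGroup V] [Module ℚ V]
    {L : AddSubgroup V} {v : V} (hv : v ∈ L)
    (hprim : ∀ (k : ℤ) (w : V), w ∈ L → v = (k : ℚ) • w → k = 1 ∨ k = -1)
    {c : ℚ} (hc : c • v ∈ L) : ∃ m : ℤ, c = m := by
  obtain ⟨a, b, hab⟩ := Rat.isCoprime_num_den c
  -- Bézout: `a • (c • v) + b • v = (1 / den c) • v`, so `v` is `den c` times a lattice vector.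
  have hden : (c.den : ℚ) ≠ 0 := Nat.cast_ne_zero.2 c.den_ne_zero
  have hfrac : ((c.den : ℚ)⁻¹) • v ∈ L := by
    have : ((c.den : ℚ)⁻¹) • v = a • (c • v) + b • v := by
      rw [← Int.cast_smul_eq_zsmul ℚ, ← Int.cast_smul_eq_zsmul ℚ, smul_smul, ← add_smul]
      congr 1
      have hab' : (a : ℚ) * c.num + b * c.den = 1 := by exact_mod_cast hab
      rw [← Rat.mul_den_eq_num c] at hab'
      field_simp
      linear_combination -hab'
    rw [this]
    exact L.add_mem (L.zsmul_mem hc a) (L.zsmul_mem hv b)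
  have hvden : v = ((c.den : ℤ) : ℚ) • ((c.den : ℚ)⁻¹ • v) := by
    rw [smul_smul, Int.cast_natCast, mul_inv_cancel₀ hden, one_smul]
  rcases hprim _ _ hfrac hvden with h | h
  · exact ⟨c.num, (Rat.coe_int_num_of_den_eq_one (by exact_mod_cast h)).symm⟩
  · omega

lemma three_smul_mem_E83_of_mem_dual83 {w : Fin 4 → ℚ} (hw : w ∈ dual83) :
    (3 : ℚ) • w ∈ E83 := by
  obtain ⟨p, hp⟩ := hw _ (half_mem_E83 (x := ![1, 1, 1, 1]) ⟨by decide, by decide⟩)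
  obtain ⟨q, hq⟩ := hw _ (half_mem_E83 (x := ![1, 1, -1, -1]) ⟨by decide, by decide⟩)
  obtain ⟨r, hr⟩ := hw _ (half_mem_E83 (x := ![1, -1, 1, -1]) ⟨by decide, by decide⟩)
  obtain ⟨s, hs⟩ := hw _ (half_mem_E83 (x := ![1, -1, -1, 1]) ⟨by decide, by decide⟩)
  simp only [B83, Fin.isValue, Matrix.cons_val_zero, Int.cast_one, one_div, Matrix.cons_val_one,
    Matrix.cons_val, Int.reduceNeg, Int.cast_neg] at hp hq hr hs
  -- inverting the Hadamard system of pairings `p, q, r, s` gives the doubled coordinates of `3 • w`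
  refine mem_E83_iff.2 ⟨![3 * (p + q + r + s), 3 * (p + q - r - s), p - q + r - s, p - q - r + s],
    ⟨fun i => ?_, ?_⟩, fun i => ?_⟩
  · fin_cases i <;> simp only [Fin.zero_eta, Fin.mk_one, Fin.reduceFinMk, Fin.isValue,
      Matrix.cons_val, Matrix.cons_val_zero, Matrix.cons_val_one] <;> omega
  · simp only [Fin.isValue, Matrix.cons_val, Matrix.cons_val_zero, Matrix.cons_val_one]; omega
  · fin_cases i <;> simp only [Fin.zero_eta, Fin.mk_one, Fin.reduceFinMk, Fin.isValue,
      Matrix.cons_val, Matrix.cons_val_zero, Matrix.cons_val_one, Int.cast_add, Int.cast_sub,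
      Int.cast_mul, Int.cast_ofNat, Pi.smul_apply, smul_eq_mul] <;> linarith

lemma mem_dual83_of_mem_E83 {v : Fin 4 → ℚ} (hv : v ∈ E83) : v ∈ dual83 :=
  fun _ hw => B83_int hw hv

lemma reflection_mem_E83 {v x : Fin 4 → ℚ} (hv : v ∈ E83) (hdual : (2 / Q83 v) • v ∈ dual83)
    (hx : x ∈ E83) : x - (2 * B83 x v / Q83 v) • v ∈ E83 := by
  obtain ⟨k, hk⟩ := hdual x hx
  rw [B83_smul_right] at hk
  rw [show 2 * B83 x v / Q83 v = k by rw [← hk]; ring]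
  exact E83.sub_int_smul_mem hx hv k

lemma IsRoot83.two_div_Q83_smul_mem_dual83 {v : Fin 4 → ℚ} (hroot : IsRoot83 v) :
    (2 / Q83 v) • v ∈ dual83 := by
  obtain ⟨hv, -, hprim, hrefl⟩ := hroot
  intro x hx
  have hmem : (2 * B83 x v / Q83 v) • v ∈ E83 := by
    have := E83.addSubgroup.sub_mem hx (hrefl x hx)
    rwa [sub_sub_cancel] at this
  obtain ⟨m, hm⟩ := AddSubgroup.exists_int_eq_of_smul_mem (L := E83.addSubgroup) hv hprim hmem
  exact ⟨m, by rw [B83_smul_right, ← hm]; ring⟩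

lemma IsRoot83.Q83_eq_two_or_six {v : Fin 4 → ℚ} (hroot : IsRoot83 v) :
    Q83 v = 2 ∨ Q83 v = 6 := by
  have hQ := two_le_Q83 hroot.1 hroot.2.1
  obtain ⟨n, hn⟩ := Q83_even hroot.1
  -- `3 (E₈³)' ⊆ E₈³`, so primitivity makes `6 / Q83 v` an integer.
  have hmem : (6 / Q83 v) • v ∈ E83 := by
    have := three_smul_mem_E83_of_mem_dual83 hroot.two_div_Q83_smul_mem_dual83
    rwa [smul_smul, show (3 : ℚ) * (2 / Q83 v) = 6 / Q83 v by ring] at this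
  obtain ⟨m, hm⟩ :=
    AddSubgroup.exists_int_eq_of_smul_mem (L := E83.addSubgroup) hroot.1 hroot.2.2.1 hmem
  have hnm : n * m = 3 := by
    have hn0 : (n : ℚ) ≠ 0 := by rintro h; rw [hn, h] at hQ; norm_num at hQ
    have : (n : ℚ) * m = 3 := by
      rw [← hm, hn]
      field_simp
      norm_num
    exact_mod_cast this
  have hn1 : 1 ≤ n := by
    have : (1 : ℚ) ≤ n := by linarith
    exact_mod_cast this
  have hn3 : n ≤ 3 := Int.le_of_dvd (by norm_num) ⟨m, hnm.symm⟩
  interval_cases n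
  · left; rw [hn]; norm_num
  · omega
  · right; rw [hn]; norm_num

lemma eq_one_or_neg_one_of_eq_int_smul {v w : Fin 4 → ℚ} {k : ℤ} (hw : w ∈ E83) (hv0 : v ≠ 0)
    (hQ : Q83 v < 8) (hvw : v = (k : ℚ) • w) : k = 1 ∨ k = -1 := by
  have hw0 : w ≠ 0 := by rintro rfl; exact hv0 (by simpa using hvw)
  have hk0 : k ≠ 0 := by rintro rfl; exact hv0 (by simpa using hvw)
  have hk : (k : ℚ) ^ 2 < 4 := by
    have := two_le_Q83 hw hw0
    rw [hvw, Q83_smul] at hQ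
    nlinarith [sq_nonneg (k : ℚ)]
  have hk' : k ^ 2 < 4 := by exact_mod_cast hk
  have : -1 ≤ k ∧ k ≤ 1 := by constructor <;> nlinarith
  omega

lemma isRoot83_of_Q83_eq {v : Fin 4 → ℚ} (hv : v ∈ E83) (hQ : Q83 v = 2 ∨ Q83 v = 6) :
    IsRoot83 v := by
  have hv0 : v ≠ 0 := by
    rintro rfl
    simp [Q83, B83] at hQ
  refine ⟨hv, hv0, fun k w hw hvw => ?_, fun x hx => reflection_mem_E83 hv ?_ hx⟩
  · exact eq_one_or_neg_one_of_eq_int_smul hw hv0 (by rcases hQ with h | h <;> linarith) hvw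
  · rcases hQ with h | h
    · rw [h, div_self two_ne_zero, one_smul]
      exact mem_dual83_of_mem_E83 hv
    · rw [h, show (2 : ℚ) / 6 = 3⁻¹ by norm_num]
      exact inv_three_smul_mem_dual83 hv h

/-- Every norm-6 vector of `E₈³` lies in `3(E₈³)'`, and the roots of `E₈³` are exactly its
vectors of norm `2` and norm `6`. -/
theorem stmt10 :
    (∀ v ∈ E83, Q83 v = 6 → (3 : ℚ)⁻¹ • v ∈ dual83) ∧
    ∀ v : Fin 4 → ℚ, IsRoot83 v ↔ v ∈ E83 ∧ (Q83 v = 2 ∨ Q83 v = 6) :=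
  ⟨fun _ hv h6 => inv_three_smul_mem_dual83 hv h6, fun _ =>
    ⟨fun hroot => ⟨hroot.1, hroot.Q83_eq_two_or_six⟩, fun ⟨hv, hQ⟩ => isRoot83_of_Q83_eq hv hQ⟩⟩
end

section
/- Let E₈⁷ be the lattice of pairs (m₁,m₂) with either m₁,m₂ ∈ ℤ and m₁+m₂ even, or m₁,m₂ ∈ ℤ+1/2 and m₁+m₂ odd, with norm m₁²+7m₂². Then every norm-14 vector of E₈⁷ lies in 7(E₈⁷)', so the roots of E₈⁷ are the vectors of norm 2 and norm 14; the root system is the orthogonal sum of two A₁'s (one with roots of norm 2, one with roots of norm 14), and the sublattice generated by the roots has index 2 in E₈⁷. -/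
/-- The lattice `E₈⁷`: pairs `(m₁,m₂)` with `m₁,m₂ ∈ ℤ` and `m₁+m₂` even, or
`m₁,m₂ ∈ ℤ+1/2` and `m₁+m₂` odd. -/
def E87 : Set (ℚ × ℚ) :=
  {v | ((∃ a : ℤ, v.1 = a) ∧ (∃ b : ℤ, v.2 = b) ∧ ∃ s : ℤ, v.1 + v.2 = 2 * s) ∨
    ((∃ a : ℤ, v.1 = a + 1 / 2) ∧ (∃ b : ℤ, v.2 = b + 1 / 2) ∧
      ∃ s : ℤ, v.1 + v.2 = 2 * s + 1)}

/-- The bilinear form of `E₈⁷`, with norm `m₁²+7m₂²`. -/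
def B87 (v w : ℚ × ℚ) : ℚ := v.1 * w.1 + 7 * (v.2 * w.2)

/-- The quadratic form (norm) of `E₈⁷`. -/
def Q87 (v : ℚ × ℚ) : ℚ := B87 v v

/-- The dual lattice `(E₈⁷)'`. -/
def dual87 : Set (ℚ × ℚ) := {w | ∀ v ∈ E87, ∃ k : ℤ, B87 v w = k}

/-- A root of `E₈⁷`: a primitive vector whose reflection preserves the lattice. -/
def IsRoot87 (v : ℚ × ℚ) : Prop :=
  v ∈ E87 ∧ v ≠ 0 ∧
    (∀ (k : ℤ) (w : ℚ × ℚ), w ∈ E87 → v = (k : ℚ) • w → k = 1 ∨ k = -1) ∧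
    ∀ x ∈ E87, x - (2 * B87 x v / Q87 v) • v ∈ E87

/-!
In the basis `e = (1/2, 1/2)`, `f = (1, -1)` the lattice `E₈⁷` is `ℤe ⊕ ℤf` with Gram matrix
`[[2, -3], [-3, 8]]`, so `ae + bf` has norm `2D` with `4D = (2a - 3b)² + 7b²`. A vector is
primitive iff `gcd(a, b) = 1`, and then its reflection preserves the lattice iff `D` divides
`B(x, v)` for `x = e, f`, i.e. `D ∣ 2a - 3b` and `D ∣ -3a + 8b`. Combining these, `D ∣ 7a` and
`D ∣ 7b`, hence `D ∣ 7`: the roots are `±e` (`D = 1`) and `±(3e + 2f)` (`D = 7`), and since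
`B(x, 3e + 2f)` is `7` times the `f`-coordinate of `x`, the norm-14 vectors lie in `7(E₈⁷)'`.
The roots span `{ae + bf | b even}`, a sublattice of index `2`.
-/

def coords87 : ℤ × ℤ →+ ℚ × ℚ where
  toFun p := (p.1 / 2 + p.2, p.1 / 2 - p.2)
  map_zero' := by simp
  map_add' p q := by ext <;> (simp only [Prod.fst_add, Prod.snd_add]; push_cast; ring)

lemma coords87_apply (p : ℤ × ℤ) : coords87 p = ((p.1 : ℚ) / 2 + p.2, (p.1 : ℚ) / 2 - p.2) := rfl

lemma coords87_injective : Function.Injective coords87 := by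
  intro p q h
  simp only [coords87_apply, Prod.mk.injEq] at h
  have h1 : (p.1 : ℚ) = q.1 := by linarith [h.1, h.2]
  have h2 : (p.2 : ℚ) = q.2 := by linarith [h.1, h.2]
  exact Prod.ext (by exact_mod_cast h1) (by exact_mod_cast h2)

lemma E87_eq_range : E87 = coords87.range := by
  ext ⟨x, y⟩
  simp only [E87, Set.mem_ofPred_eq, SetLike.mem_coe, AddMonoidHom.mem_range, coords87_apply,
    Prod.mk.injEq, Prod.exists]
  constructor
  · rintro (⟨⟨m, rfl⟩, ⟨n, rfl⟩, ⟨s, hs⟩⟩ | ⟨⟨m, rfl⟩, ⟨n, rfl⟩, ⟨s, hs⟩⟩)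
    · exact ⟨2 * s, s - n, by push_cast; linarith, by push_cast; linarith⟩
    · exact ⟨2 * s + 1, m - s, by push_cast; linarith, by push_cast; linarith⟩
  · rintro ⟨a, b, rfl, rfl⟩
    rcases Int.even_or_odd' a with ⟨t, rfl | rfl⟩
    · exact Or.inl ⟨⟨t + b, by push_cast; ring⟩, ⟨t - b, by push_cast; ring⟩,
        ⟨t, by push_cast; ring⟩⟩
    · exact Or.inr ⟨⟨t + b, by push_cast; ring⟩, ⟨t - b, by push_cast; ring⟩,
        ⟨t, by push_cast; ring⟩⟩

lemma coords87_mem_E87 (p : ℤ × ℤ) : coords87 p ∈ E87 := E87_eq_range ▸ ⟨p, rfl⟩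

def gram87 (p q : ℤ × ℤ) : ℤ := 2 * p.1 * q.1 - 3 * (p.1 * q.2 + p.2 * q.1) + 8 * p.2 * q.2

def halfNorm87 (p : ℤ × ℤ) : ℤ := p.1 ^ 2 - 3 * p.1 * p.2 + 4 * p.2 ^ 2

lemma B87_coords87 (p q : ℤ × ℤ) : B87 (coords87 p) (coords87 q) = gram87 p q := by
  simp only [B87, coords87_apply, gram87]; push_cast; ring

lemma Q87_coords87 (p : ℤ × ℤ) : Q87 (coords87 p) = 2 * halfNorm87 p := by
  rw [Q87, B87_coords87, gram87, halfNorm87]; push_cast; ring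

lemma Q87_coords87_eq_iff (p : ℤ × ℤ) (n : ℤ) : Q87 (coords87 p) = 2 * n ↔ halfNorm87 p = n := by
  rw [Q87_coords87]; norm_cast; omega

lemma four_mul_halfNorm87 (p : ℤ × ℤ) :
    4 * halfNorm87 p = (2 * p.1 - 3 * p.2) ^ 2 + 7 * p.2 ^ 2 := by
  rw [halfNorm87]; ring

lemma halfNorm87_pos {p : ℤ × ℤ} (hp : p ≠ 0) : 0 < halfNorm87 p := by
  have h := four_mul_halfNorm87 p
  rcases eq_or_ne p.2 0 with hb | hb
  · have ha : p.1 ≠ 0 := fun ha => hp (Prod.ext ha hb)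
    rw [hb] at h
    nlinarith [sq_pos_of_ne_zero ha]
  · nlinarith [sq_pos_of_ne_zero hb, sq_nonneg (2 * p.1 - 3 * p.2)]

lemma halfNorm87_eq_one_iff (p : ℤ × ℤ) : halfNorm87 p = 1 ↔ p = (1, 0) ∨ p = (-1, 0) := by
  refine ⟨fun h => ?_, by rintro (rfl | rfl) <;> rfl⟩
  have h4 := four_mul_halfNorm87 p
  have hb : p.2 = 0 := by nlinarith [sq_nonneg (2 * p.1 - 3 * p.2), sq_nonneg p.2]
  have ha : p.1 ^ 2 = 1 := by rw [h, hb] at h4; linarith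
  rcases sq_eq_one_iff.1 ha with ha | ha
  · exact Or.inl (Prod.ext ha hb)
  · exact Or.inr (Prod.ext ha hb)

lemma halfNorm87_eq_seven_iff (p : ℤ × ℤ) : halfNorm87 p = 7 ↔ p = (3, 2) ∨ p = (-3, -2) := by
  refine ⟨fun h => ?_, by rintro (rfl | rfl) <;> rfl⟩
  obtain ⟨a, b⟩ := p
  have h4 := four_mul_halfNorm87 (a, b)
  rw [h] at h4
  dsimp only at h4
  have hb : -2 ≤ b ∧ b ≤ 2 := by constructor <;> nlinarith [sq_nonneg (2 * a - 3 * b)]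
  have ha : -6 ≤ a ∧ a ≤ 6 := by constructor <;> nlinarith [sq_nonneg (2 * a - 3 * b)]
  obtain ⟨hb1, hb2⟩ := hb
  obtain ⟨ha1, ha2⟩ := ha
  interval_cases a <;> interval_cases b <;> simp_all

lemma ne_zero_of_isCoprime_fst_snd {p : ℤ × ℤ} (hp : IsCoprime p.1 p.2) : p ≠ 0 := by
  rintro rfl
  exact not_isCoprime_zero_zero hp

lemma primitive_coords87_iff (p : ℤ × ℤ) :
    (∀ (k : ℤ) (w : ℚ × ℚ), w ∈ E87 → coords87 p = (k : ℚ) • w → k = 1 ∨ k = -1) ↔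
      IsCoprime p.1 p.2 := by
  have key (k : ℤ) (q : ℤ × ℤ) : coords87 p = (k : ℚ) • coords87 q ↔ p = k • q := by
    rw [Int.cast_smul_eq_zsmul, ← map_zsmul, coords87_injective.eq_iff]
  simp only [E87_eq_range, SetLike.mem_coe, AddMonoidHom.mem_range, forall_exists_index,
    forall_apply_eq_imp_iff, key]
  constructor
  · intro h
    have hg : p = (Int.gcd p.1 p.2 : ℤ) • (p.1 / Int.gcd p.1 p.2, p.2 / Int.gcd p.1 p.2) :=
      Prod.ext (Int.mul_ediv_cancel' (Int.gcd_dvd_left _ _)).symm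
        (Int.mul_ediv_cancel' (Int.gcd_dvd_right _ _)).symm
    rw [Int.isCoprime_iff_gcd_eq_one]
    rcases h _ _ hg with h | h <;> omega
  · rintro hcop k q rfl
    exact Int.isUnit_iff.1 (hcop.isUnit_of_dvd' (dvd_mul_right k q.1) (dvd_mul_right k q.2))

lemma exists_int_eq_of_smul_coords87_mem {p : ℤ × ℤ} (hp : IsCoprime p.1 p.2) {c : ℚ}
    (h : c • coords87 p ∈ E87) : ∃ k : ℤ, c = k := by
  obtain ⟨q, hq⟩ := E87_eq_range ▸ h
  simp only [coords87_apply, Prod.smul_mk, smul_eq_mul, Prod.mk.injEq] at hq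
  have h1 : (q.1 : ℚ) = c * p.1 := by linarith [hq.1, hq.2]
  have h2 : (q.2 : ℚ) = c * p.2 := by linarith [hq.1, hq.2]
  obtain ⟨u, v, huv⟩ := hp
  have huv' : (u : ℚ) * p.1 + v * p.2 = 1 := by exact_mod_cast huv
  exact ⟨u * q.1 + v * q.2, by push_cast [h1, h2]; linear_combination -c * huv'⟩

lemma reflection_mem_E87_iff {p : ℤ × ℤ} (hp : IsCoprime p.1 p.2) :
    (∀ x ∈ E87, x - (2 * B87 x (coords87 p) / Q87 (coords87 p)) • coords87 p ∈ E87) ↔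
      ∀ q, halfNorm87 p ∣ gram87 q p := by
  have hD : (halfNorm87 p : ℚ) ≠ 0 := by
    exact_mod_cast (halfNorm87_pos (ne_zero_of_isCoprime_fst_snd hp)).ne'
  have hcoef (q : ℤ × ℤ) : 2 * B87 (coords87 q) (coords87 p) / Q87 (coords87 p) =
      gram87 q p / halfNorm87 p := by
    rw [B87_coords87, Q87_coords87, mul_div_mul_left _ _ two_ne_zero]
  rw [E87_eq_range]
  simp only [SetLike.mem_coe, AddMonoidHom.mem_range, forall_exists_index,
    forall_apply_eq_imp_iff, hcoef]
  constructor
  · intro h q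
    obtain ⟨y, hy⟩ := h q
    have hmem : ((gram87 q p : ℚ) / halfNorm87 p) • coords87 p = coords87 (q - y) := by
      rw [map_sub, hy, sub_sub_cancel]
    obtain ⟨k, hk⟩ := exists_int_eq_of_smul_coords87_mem hp (hmem ▸ coords87_mem_E87 _)
    rw [div_eq_iff hD] at hk
    exact ⟨k, by rw [mul_comm] at hk; exact_mod_cast hk⟩
  · intro h q
    obtain ⟨k, hk⟩ := h q
    refine ⟨q - k • p, ?_⟩
    rw [hk, map_sub, map_zsmul, Int.cast_mul, mul_div_cancel_left₀ _ hD, Int.cast_smul_eq_zsmul]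

lemma isRoot87_coords87_iff (p : ℤ × ℤ) :
    IsRoot87 (coords87 p) ↔ IsCoprime p.1 p.2 ∧ ∀ q, halfNorm87 p ∣ gram87 q p := by
  constructor
  · rintro ⟨-, -, hprim, hrefl⟩
    have hp := (primitive_coords87_iff p).1 hprim
    exact ⟨hp, (reflection_mem_E87_iff hp).1 hrefl⟩
  · rintro ⟨hp, hdvd⟩
    exact ⟨coords87_mem_E87 p,
      (map_ne_zero_iff _ coords87_injective).2 (ne_zero_of_isCoprime_fst_snd hp),
      (primitive_coords87_iff p).2 hp, (reflection_mem_E87_iff hp).2 hdvd⟩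

lemma dvd_seven_of_dvd_gram87 {d : ℤ} {p : ℤ × ℤ} (hp : IsCoprime p.1 p.2)
    (h₁ : d ∣ gram87 (1, 0) p) (h₂ : d ∣ gram87 (0, 1) p) : d ∣ 7 := by
  have h₁' : d ∣ 7 * p.1 := by
    have : 7 * p.1 = 8 * gram87 (1, 0) p + 3 * gram87 (0, 1) p := by simp only [gram87]; ring
    exact this ▸ (h₁.mul_left 8).add (h₂.mul_left 3)
  have h₂' : d ∣ 7 * p.2 := by
    have : 7 * p.2 = 3 * gram87 (1, 0) p + 2 * gram87 (0, 1) p := by simp only [gram87]; ring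
    exact this ▸ (h₁.mul_left 3).add (h₂.mul_left 2)
  obtain ⟨u, v, huv⟩ := hp
  have : 7 = u * (7 * p.1) + v * (7 * p.2) := by linear_combination -7 * huv
  exact this ▸ (h₁'.mul_left u).add (h₂'.mul_left v)

lemma seven_dvd_gram87 {p : ℤ × ℤ} (hp : halfNorm87 p = 7) (q : ℤ × ℤ) : 7 ∣ gram87 q p := by
  rcases (halfNorm87_eq_seven_iff p).1 hp with rfl | rfl
  · exact ⟨q.2, by simp only [gram87]; ring⟩
  · exact ⟨-q.2, by simp only [gram87]; ring⟩

lemma isRoot87_coords87_iff_halfNorm87 (p : ℤ × ℤ) :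
    IsRoot87 (coords87 p) ↔ halfNorm87 p = 1 ∨ halfNorm87 p = 7 := by
  rw [isRoot87_coords87_iff]
  constructor
  · rintro ⟨hp, hdvd⟩
    have h7 := dvd_seven_of_dvd_gram87 hp (hdvd _) (hdvd _)
    have hpos := halfNorm87_pos (ne_zero_of_isCoprime_fst_snd hp)
    have hle := Int.le_of_dvd (by norm_num) h7
    generalize halfNorm87 p = d at h7 hpos hle
    interval_cases d <;> omega
  · rintro (h | h)
    · refine ⟨?_, fun q => h ▸ one_dvd _⟩
      rcases (halfNorm87_eq_one_iff p).1 h with rfl | rfl <;>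
        exact Int.isCoprime_iff_gcd_eq_one.2 rfl
    · refine ⟨?_, fun q => h ▸ seven_dvd_gram87 h q⟩
      rcases (halfNorm87_eq_seven_iff p).1 h with rfl | rfl <;>
        exact Int.isCoprime_iff_gcd_eq_one.2 rfl

lemma isRoot87_iff (v : ℚ × ℚ) : IsRoot87 v ↔ v ∈ E87 ∧ (Q87 v = 2 ∨ Q87 v = 14) := by
  by_cases hv : v ∈ E87
  · obtain ⟨p, rfl⟩ := E87_eq_range ▸ hv
    rw [isRoot87_coords87_iff_halfNorm87, Q87_coords87, and_iff_right hv]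
    norm_cast
    omega
  · exact iff_of_false (fun h => hv h.1) (fun h => hv h.1)

lemma B87_smul_right (v w : ℚ × ℚ) (c : ℚ) : B87 v (c • w) = c * B87 v w := by
  simp only [B87, Prod.smul_fst, Prod.smul_snd, smul_eq_mul]; ring

lemma inv_seven_smul_mem_dual87 {v : ℚ × ℚ} (hv : v ∈ E87) (hQ : Q87 v = 14) :
    (7 : ℚ)⁻¹ • v ∈ dual87 := by
  obtain ⟨p, rfl⟩ := E87_eq_range ▸ hv
  have hp : halfNorm87 p = 7 := (Q87_coords87_eq_iff p 7).1 (by rw [hQ]; norm_num)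
  intro x hx
  obtain ⟨q, rfl⟩ := E87_eq_range ▸ hx
  obtain ⟨k, hk⟩ := seven_dvd_gram87 hp q
  exact ⟨k, by rw [B87_smul_right, B87_coords87, hk]; push_cast; ring⟩

lemma ncard_setOf_Q87_eq {c : ℚ} {n : ℤ} (hc : c = 2 * n) {p₁ p₂ : ℤ × ℤ} (hne : p₁ ≠ p₂)
    (h : ∀ p, halfNorm87 p = n ↔ p = p₁ ∨ p = p₂) :
    Set.ncard {v | v ∈ E87 ∧ Q87 v = c} = 2 := by
  have : {v | v ∈ E87 ∧ Q87 v = c} = coords87 '' {p₁, p₂} := by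
    ext v
    constructor
    · rintro ⟨hv, hQ⟩
      obtain ⟨p, rfl⟩ := E87_eq_range ▸ hv
      exact ⟨p, (h p).1 ((Q87_coords87_eq_iff p n).1 (hc ▸ hQ)), rfl⟩
    · rintro ⟨p, hp, rfl⟩
      exact ⟨coords87_mem_E87 p, hc ▸ (Q87_coords87_eq_iff p n).2 ((h p).2 hp)⟩
  rw [this, Set.ncard_image_of_injective _ coords87_injective, Set.ncard_pair hne]

lemma B87_eq_zero_of_Q87 {v w : ℚ × ℚ} (hv : v ∈ E87) (hQv : Q87 v = 2) (hw : w ∈ E87)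
    (hQw : Q87 w = 14) : B87 v w = 0 := by
  obtain ⟨p, rfl⟩ := E87_eq_range ▸ hv
  obtain ⟨q, rfl⟩ := E87_eq_range ▸ hw
  rcases (halfNorm87_eq_one_iff p).1 ((Q87_coords87_eq_iff p 1).1 (by rw [hQv]; norm_num))
    with rfl | rfl <;>
  rcases (halfNorm87_eq_seven_iff q).1 ((Q87_coords87_eq_iff q 7).1 (by rw [hQw]; norm_num))
    with rfl | rfl <;>
  rw [B87_coords87] <;> rfl

lemma closure_E87 : AddSubgroup.closure E87 = (⊤ : AddSubgroup (ℤ × ℤ)).map coords87 := by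
  rw [E87_eq_range, AddSubgroup.closure_eq, AddMonoidHom.range_eq_map]

lemma setOf_isRoot87_eq_image :
    {v | IsRoot87 v} = coords87 '' {(1, 0), (-1, 0), (3, 2), (-3, -2)} := by
  ext v
  constructor
  · intro hv
    obtain ⟨p, rfl⟩ := E87_eq_range ▸ hv.1
    rw [Set.mem_ofPred_eq, isRoot87_coords87_iff_halfNorm87, halfNorm87_eq_one_iff,
      halfNorm87_eq_seven_iff] at hv
    exact ⟨p, by simpa only [Set.mem_insert_iff, Set.mem_singleton_iff, or_assoc] using hv, rfl⟩
  · rintro ⟨p, hp, rfl⟩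
    rw [Set.mem_ofPred_eq, isRoot87_coords87_iff_halfNorm87]
    rcases hp with rfl | rfl | rfl | rfl <;> decide

lemma closure_root_coords87 :
    AddSubgroup.closure ({(1, 0), (-1, 0), (3, 2), (-3, -2)} : Set (ℤ × ℤ)) =
      (⊤ : AddSubgroup ℤ).prod (AddSubgroup.zmultiples 2) := by
  apply le_antisymm
  · rw [AddSubgroup.closure_le]
    rintro _ (rfl | rfl | rfl | rfl) <;>
      simp only [SetLike.mem_coe, AddSubgroup.mem_prod, AddSubgroup.mem_top, true_and,
        Int.mem_zmultiples_iff] <;>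
      decide
  · rintro ⟨a, b⟩ ⟨-, c, rfl⟩
    have : ((a, c • 2) : ℤ × ℤ) = (a - 3 * c) • ((1, 0) : ℤ × ℤ) + c • (3, 2) := by
      ext <;>
        simp only [Prod.fst_add, Prod.snd_add, Prod.smul_fst, Prod.smul_snd, smul_eq_mul] <;> ring
    rw [this]
    exact add_mem (zsmul_mem (AddSubgroup.subset_closure (by simp)) _)
      (zsmul_mem (AddSubgroup.subset_closure (by simp)) _)

lemma closure_setOf_isRoot87 : AddSubgroup.closure {v | IsRoot87 v} =
    ((⊤ : AddSubgroup ℤ).prod (AddSubgroup.zmultiples 2)).map coords87 := by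
  rw [setOf_isRoot87_eq_image, ← AddMonoidHom.map_closure, closure_root_coords87]

/-- Every norm-14 vector of `E₈⁷` lies in `7(E₈⁷)'`; the roots of `E₈⁷` are the vectors of
norm `2` and `14`; the root system is the orthogonal sum of two `A₁`'s (two roots of norm `2`
and two of norm `14`, mutually orthogonal); and the sublattice generated by the roots has
index `2` in `E₈⁷`. -/
theorem stmt12 :
    (∀ v ∈ E87, Q87 v = 14 → (7 : ℚ)⁻¹ • v ∈ dual87) ∧
    (∀ v : ℚ × ℚ, IsRoot87 v ↔ v ∈ E87 ∧ (Q87 v = 2 ∨ Q87 v = 14)) ∧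
    Set.ncard {v | v ∈ E87 ∧ Q87 v = 2} = 2 ∧
    Set.ncard {v | v ∈ E87 ∧ Q87 v = 14} = 2 ∧
    (∀ v ∈ E87, Q87 v = 2 → ∀ w ∈ E87, Q87 w = 14 → B87 v w = 0) ∧
    ((AddSubgroup.closure {v : ℚ × ℚ | IsRoot87 v}).addSubgroupOf
      (AddSubgroup.closure E87)).index = 2 := by
  refine ⟨fun _ => inv_seven_smul_mem_dual87, isRoot87_iff,
    ncard_setOf_Q87_eq (n := 1) (by norm_num) (by decide) halfNorm87_eq_one_iff,
    ncard_setOf_Q87_eq (n := 7) (by norm_num) (by decide) halfNorm87_eq_seven_iff,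
    fun _ hv hQv _ => B87_eq_zero_of_Q87 hv hQv, ?_⟩
  change AddSubgroup.relIndex _ _ = 2
  rw [closure_setOf_isRoot87, closure_E87,
    AddSubgroup.relIndex_map_map_of_injective _ _ coords87_injective,
    AddSubgroup.relIndex_top_right, AddSubgroup.index_prod, AddSubgroup.index_top,
    Int.index_zmultiples]
  rfl
end

section
/- In the Lorentzian lattice L = E₈⁷(-1) ⊕ II_{1,1}, the six vectors α₁=((1/2,1/2),0,0), α₂=((7/2,-1/2),0,0), α₃=((0,0),1,1), α₄=((-1/2,-1/2),0,-1), α₅=((-2,0),1,-1), α₆=((-7/2,1/2),0,-7) are roots of L, with α₂,α₆ of norm -14 and the rest of norm -2, and each satisfies (ρ,αᵢ) = αᵢ²/2 for ρ = ((2,0),-2,3). Moreover ρ² = 8. -/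
/-- The Lorentzian lattice `L = E₈⁷(-1) ⊕ II_{1,1}` inside `ℚ² × ℚ × ℚ`. -/
def L14 : Set ((ℚ × ℚ) × ℚ × ℚ) :=
  {x | x.1 ∈ E87 ∧ (∃ a : ℤ, x.2.1 = a) ∧ ∃ b : ℤ, x.2.2 = b}

/-- The bilinear form of `L = E₈⁷(-1) ⊕ II_{1,1}`: `(v,m,n)² = -v²_{E₈⁷} - 2mn`. -/
def BL14 (x y : (ℚ × ℚ) × ℚ × ℚ) : ℚ :=
  -(B87 x.1 y.1) - (x.2.1 * y.2.2 + x.2.2 * y.2.1)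

/-- A root of `L`: a primitive negative norm vector whose reflection preserves `L`. -/
def IsRootL14 (α : (ℚ × ℚ) × ℚ × ℚ) : Prop :=
  α ∈ L14 ∧ BL14 α α < 0 ∧
    (∀ (k : ℤ) (w : (ℚ × ℚ) × ℚ × ℚ), w ∈ L14 → α = (k : ℚ) • w → k = 1 ∨ k = -1) ∧
    ∀ x ∈ L14, x - (2 * BL14 x α / BL14 α α) • α ∈ L14

/-- The simple roots found by Vinberg's algorithm and the Weyl vector. -/
def b₁ : (ℚ × ℚ) × ℚ × ℚ := ((1/2, 1/2), 0, 0)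
def b₂ : (ℚ × ℚ) × ℚ × ℚ := ((7/2, -1/2), 0, 0)
def b₃ : (ℚ × ℚ) × ℚ × ℚ := ((0, 0), 1, 1)
def b₄ : (ℚ × ℚ) × ℚ × ℚ := ((-1/2, -1/2), 0, -1)
def b₅ : (ℚ × ℚ) × ℚ × ℚ := ((-2, 0), 1, -1)
def b₆ : (ℚ × ℚ) × ℚ × ℚ := ((-7/2, 1/2), 0, -7)
def ρ14 : (ℚ × ℚ) × ℚ × ℚ := ((2, 0), -2, 3)

/-!
Writing `v = (a/2, a/2 + 2c)` identifies `E₈⁷` with `ℤ²`, so `L` consists of the vectors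
`((a/2, a/2 + 2c), m, n)` with `a c m n ∈ ℤ`. In these coordinates `2(x,α)/α²` is an integer
linear form in `x` for each of the six vectors `α`, so the reflections preserve `L`. Each `α` is
primitive because one of the functionals `2 v₂` and `m`, which are integral on `L`, takes the
value `±1` on it.
-/

def IsPrimitiveIn {V : Type*} [SMul ℚ V] (S : Set V) (α : V) : Prop :=
  ∀ (k : ℤ) (w : V), w ∈ S → α = (k : ℚ) • w → k = 1 ∨ k = -1

theorem IsPrimitiveIn.of_linearMap {V : Type*} [AddCommGroup V] [Module ℚ V] {S : Set V}
    {α : V} (φ : V →ₗ[ℚ] ℚ) (hφ : ∀ w ∈ S, ∃ z : ℤ, φ w = z) (hα : φ α = 1 ∨ φ α = -1) :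
    IsPrimitiveIn S α := by
  intro k w hw h
  obtain ⟨z, hz⟩ := hφ w hw
  have hkz : (k : ℚ) * z = 1 ∨ (k : ℚ) * z = -1 := by
    rwa [h, map_smul, hz, smul_eq_mul] at hα
  rcases hkz with hkz | hkz
  · exact Int.eq_one_or_neg_one_of_mul_eq_one (u := k) (v := z) (by exact_mod_cast hkz)
  · exact Int.eq_one_or_neg_one_of_mul_eq_neg_one (u := k) (v := z) (by exact_mod_cast hkz)

theorem mem_E87_iff {v : ℚ × ℚ} :
    v ∈ E87 ↔ ∃ a c : ℤ, v = ((a : ℚ) / 2, (a : ℚ) / 2 + 2 * c) := by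
  constructor
  · rintro (⟨⟨p, hp⟩, -, ⟨s, hs⟩⟩ | ⟨⟨p, hp⟩, -, ⟨s, hs⟩⟩)
    · exact ⟨2 * p, s - p, Prod.ext (by push_cast; linarith) (by push_cast; linarith)⟩
    · exact ⟨2 * p + 1, s - p, Prod.ext (by push_cast; linarith) (by push_cast; linarith)⟩
  · rintro ⟨a, c, rfl⟩
    obtain ⟨p, rfl | rfl⟩ := Int.even_or_odd' a
    · exact Or.inl ⟨⟨p, by push_cast; ring⟩, ⟨p + 2 * c, by push_cast; ring⟩,
        ⟨p + c, by push_cast; ring⟩⟩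
    · exact Or.inr ⟨⟨p, by push_cast; ring⟩, ⟨p + 2 * c, by push_cast; ring⟩,
        ⟨p + c, by push_cast; ring⟩⟩

theorem mem_L14_iff {x : (ℚ × ℚ) × ℚ × ℚ} :
    x ∈ L14 ↔ ∃ a c m n : ℤ, x = (((a : ℚ) / 2, (a : ℚ) / 2 + 2 * c), (m : ℚ), (n : ℚ)) := by
  obtain ⟨v, m, n⟩ := x
  simp only [L14, Set.mem_ofPred_eq, mem_E87_iff, Prod.mk.injEq]
  constructor
  · rintro ⟨⟨a, c, rfl⟩, ⟨m, rfl⟩, ⟨n, rfl⟩⟩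
    exact ⟨a, c, m, n, rfl, rfl, rfl⟩
  · rintro ⟨a, c, m, n, rfl, rfl, rfl⟩
    exact ⟨⟨a, c, rfl⟩, ⟨m, rfl⟩, ⟨n, rfl⟩⟩

theorem sub_intCast_smul_mem_L14 {x α : (ℚ × ℚ) × ℚ × ℚ} (hx : x ∈ L14) (hα : α ∈ L14)
    (k : ℤ) : x - (k : ℚ) • α ∈ L14 := by
  obtain ⟨a, c, m, n, rfl⟩ := mem_L14_iff.mp hx
  obtain ⟨a', c', m', n', rfl⟩ := mem_L14_iff.mp hα
  refine mem_L14_iff.mpr ⟨a - k * a', c - k * c', m - k * m', n - k * n', ?_⟩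
  simp only [Prod.smul_mk, Prod.mk_sub_mk, smul_eq_mul, Prod.mk.injEq]
  push_cast
  refine ⟨⟨?_, ?_⟩, ?_, ?_⟩ <;> ring

theorem isRootL14_of_integral {α : (ℚ × ℚ) × ℚ × ℚ} (hα : α ∈ L14) (hneg : BL14 α α < 0)
    (hprim : IsPrimitiveIn L14 α)
    (hint : ∀ x ∈ L14, ∃ k : ℤ, 2 * BL14 x α / BL14 α α = k) : IsRootL14 α := by
  refine ⟨hα, hneg, hprim, fun x hx => ?_⟩
  obtain ⟨k, hk⟩ := hint x hx
  rw [hk]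
  exact sub_intCast_smul_mem_L14 hx hα k

def twiceE87Snd : (ℚ × ℚ) × ℚ × ℚ →ₗ[ℚ] ℚ :=
  2 • (LinearMap.snd ℚ ℚ ℚ ∘ₗ LinearMap.fst ℚ (ℚ × ℚ) (ℚ × ℚ))

theorem twiceE87Snd_apply (x : (ℚ × ℚ) × ℚ × ℚ) : twiceE87Snd x = 2 * x.1.2 := by
  simp [twiceE87Snd, two_mul]

def hypFst : (ℚ × ℚ) × ℚ × ℚ →ₗ[ℚ] ℚ :=
  LinearMap.fst ℚ ℚ ℚ ∘ₗ LinearMap.snd ℚ (ℚ × ℚ) (ℚ × ℚ)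

theorem isPrimitiveIn_L14_of_twiceE87Snd {α : (ℚ × ℚ) × ℚ × ℚ}
    (hα : 2 * α.1.2 = 1 ∨ 2 * α.1.2 = -1) : IsPrimitiveIn L14 α := by
  refine IsPrimitiveIn.of_linearMap twiceE87Snd (fun w hw => ?_) (by rwa [twiceE87Snd_apply])
  obtain ⟨a, c, m, n, rfl⟩ := mem_L14_iff.mp hw
  exact ⟨a + 4 * c, by rw [twiceE87Snd_apply]; push_cast; ring⟩

theorem isPrimitiveIn_L14_of_hypFst {α : (ℚ × ℚ) × ℚ × ℚ} (hα : α.2.1 = 1) :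
    IsPrimitiveIn L14 α := by
  refine IsPrimitiveIn.of_linearMap hypFst (fun w hw => ?_) (Or.inl hα)
  obtain ⟨a, c, m, n, rfl⟩ := mem_L14_iff.mp hw
  exact ⟨m, rfl⟩

theorem isRootL14_b₁ : IsRootL14 b₁ := by
  refine isRootL14_of_integral (mem_L14_iff.mpr ⟨1, 0, 0, 0, by norm_num [b₁]⟩)
    (by norm_num [BL14, B87, b₁]) (isPrimitiveIn_L14_of_twiceE87Snd (by norm_num [b₁])) ?_
  intro x hx
  obtain ⟨a, c, m, n, rfl⟩ := mem_L14_iff.mp hx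
  exact ⟨2 * a + 7 * c, by norm_num [BL14, B87, b₁]; ring⟩

theorem isRootL14_b₂ : IsRootL14 b₂ := by
  refine isRootL14_of_integral (mem_L14_iff.mpr ⟨7, -2, 0, 0, by norm_num [b₂]⟩)
    (by norm_num [BL14, B87, b₂]) (isPrimitiveIn_L14_of_twiceE87Snd (by norm_num [b₂])) ?_
  intro x hx
  obtain ⟨a, c, m, n, rfl⟩ := mem_L14_iff.mp hx
  exact ⟨-c, by norm_num [BL14, B87, b₂]; ring⟩

theorem isRootL14_b₃ : IsRootL14 b₃ := by
  refine isRootL14_of_integral (mem_L14_iff.mpr ⟨0, 0, 1, 1, by norm_num [b₃]⟩)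
    (by norm_num [BL14, B87, b₃]) (isPrimitiveIn_L14_of_hypFst rfl) ?_
  intro x hx
  obtain ⟨a, c, m, n, rfl⟩ := mem_L14_iff.mp hx
  exact ⟨m + n, by norm_num [BL14, B87, b₃]; ring⟩

theorem isRootL14_b₄ : IsRootL14 b₄ := by
  refine isRootL14_of_integral (mem_L14_iff.mpr ⟨-1, 0, 0, -1, by norm_num [b₄]⟩)
    (by norm_num [BL14, B87, b₄]) (isPrimitiveIn_L14_of_twiceE87Snd (by norm_num [b₄])) ?_
  intro x hx
  obtain ⟨a, c, m, n, rfl⟩ := mem_L14_iff.mp hx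
  exact ⟨-(2 * a + 7 * c + m), by norm_num [BL14, B87, b₄]; ring⟩

theorem isRootL14_b₅ : IsRootL14 b₅ := by
  refine isRootL14_of_integral (mem_L14_iff.mpr ⟨-4, 1, 1, -1, by norm_num [b₅]⟩)
    (by norm_num [BL14, B87, b₅]) (isPrimitiveIn_L14_of_hypFst rfl) ?_
  intro x hx
  obtain ⟨a, c, m, n, rfl⟩ := mem_L14_iff.mp hx
  exact ⟨n - m - a, by norm_num [BL14, B87, b₅]; ring⟩

theorem isRootL14_b₆ : IsRootL14 b₆ := by
  refine isRootL14_of_integral (mem_L14_iff.mpr ⟨-7, 2, 0, -7, by norm_num [b₆]⟩)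
    (by norm_num [BL14, B87, b₆]) (isPrimitiveIn_L14_of_twiceE87Snd (by norm_num [b₆])) ?_
  intro x hx
  obtain ⟨a, c, m, n, rfl⟩ := mem_L14_iff.mp hx
  exact ⟨c - m, by norm_num [BL14, B87, b₆]; ring⟩

/-- The six given vectors are roots of `L = E₈⁷(-1) ⊕ II_{1,1}`, with `α₂, α₆` of norm
`-14` and the rest of norm `-2`; each satisfies `(ρ,αᵢ) = αᵢ²/2` for `ρ = ((2,0),-2,3)`,
and `ρ² = 8`. -/
theorem stmt14 :
    IsRootL14 b₁ ∧ IsRootL14 b₂ ∧ IsRootL14 b₃ ∧ IsRootL14 b₄ ∧ IsRootL14 b₅ ∧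
    IsRootL14 b₆ ∧
    BL14 b₂ b₂ = -14 ∧ BL14 b₆ b₆ = -14 ∧
    BL14 b₁ b₁ = -2 ∧ BL14 b₃ b₃ = -2 ∧ BL14 b₄ b₄ = -2 ∧ BL14 b₅ b₅ = -2 ∧
    BL14 ρ14 b₁ = BL14 b₁ b₁ / 2 ∧ BL14 ρ14 b₂ = BL14 b₂ b₂ / 2 ∧
    BL14 ρ14 b₃ = BL14 b₃ b₃ / 2 ∧ BL14 ρ14 b₄ = BL14 b₄ b₄ / 2 ∧
    BL14 ρ14 b₅ = BL14 b₅ b₅ / 2 ∧ BL14 ρ14 b₆ = BL14 b₆ b₆ / 2 ∧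
    BL14 ρ14 ρ14 = 8 := by
  refine ⟨isRootL14_b₁, isRootL14_b₂, isRootL14_b₃, isRootL14_b₄, isRootL14_b₅, isRootL14_b₆,
    ?_⟩
  norm_num [BL14, B87, b₁, b₂, b₃, b₄, b₅, b₆, ρ14]
end
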